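/- Consider agents i = 2,…,n with EU functionals U_i(X) = E_P[u_i(X)] on a nonatomic probability space, and fix a bounded random variable Y. For a vector (X₂,…,Xₙ) of bounded random variables with Σ_{i=2}^n X_i = Y a.s.: (1) (X₂,…,Xₙ) is Y-Pareto optimal if and only if there exists a weight vector λ = (λ₂,…,λₙ) with all λ_i > 0 such that (X₂,…,Xₙ) maximizes Σ_{i=2}^n λ_i U_i(X_i) over all vectors of bounded random variables summing a.s. to Y; (2) for a given such λ, (X₂,…,Xₙ) maximizes Σ_{i=2}^n λ_i U_i(X_i) over all vectors of bounded random variables summing a.s. to Y if and only if λ_i u_i′(X_i) = λ_j u_j′(X_j) a.s. for all i, j ∈ {2,…,n}. -/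

import Mathlib

/-!
Everything rests on the directional derivative of expected utility: for bounded `X` and `H`,
`t ↦ E[u(X + tH)]` has derivative `E[u′(X) H]` at `0`.

If `λ_i u_i′(X_i)` is a.s. a common value, the tangent-line inequality of each concave `u_i`,
weighted by `λ_i` and summed, shows that no reallocation raises `∑ λ_i U_i`. Conversely, at a
maximum, moving `t D` from agent `j` to agent `i` with `D = λ_i u_i′(X_i) − λ_j u_j′(X_j)` changes
the weighted sum at rate `E[D²]`, which must therefore vanish.

For a Pareto optimum the same transfers show that `E[f D] > 0` forces `E[g D] ≥ 0`, where
`f = u_i′(X_i)` and `g = u_j′(X_j)`. Testing `D = t f − (g − c f)` with `c = E[fg] / E[f²]` and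
letting `t ↓ 0` gives `E[(g − c f)²] = 0`: marginal utilities are a.s. proportional, and the
reciprocals of the proportionality constants are the weights.
-/

open MeasureTheory Set

noncomputable section

variable {Ω : Type*} [MeasurableSpace Ω]

/-- The cumulative distribution function `F_X(x) = P(X ≤ x)` of a random variable. -/
def cdfR (P : Measure Ω) (X : Ω → ℝ) (x : ℝ) : ℝ := (P {ω | X ω ≤ x}).toReal

/-- The left-continuous quantile function `F_X⁻¹(t) = inf {x | F_X(x) ≥ t}`. -/
def quantR (P : Measure Ω) (X : Ω → ℝ) (t : ℝ) : ℝ := sInf {x : ℝ | t ≤ cdfR P X x}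

/-- A bounded (measurable) random variable. -/
def IsBddRV (X : Ω → ℝ) : Prop := Measurable X ∧ ∃ C : ℝ, ∀ ω, |X ω| ≤ C

/-- Comonotonicity of two random variables. -/
def ComonRV (Y Z : Ω → ℝ) : Prop := ∀ ω ω' : Ω, 0 ≤ (Y ω - Y ω') * (Z ω - Z ω')

/-- `U` is uniformly distributed on `(0,1)` under `P`. -/
def UnifOn01 (P : Measure Ω) (U : Ω → ℝ) : Prop :=
  Measurable U ∧ ∀ t ∈ Icc (0:ℝ) 1, cdfR P U t = t

/-- A nonatomic measure. -/
def NonatomicM (P : Measure Ω) : Prop :=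
  ∀ s : Set Ω, MeasurableSet s → P s ≠ 0 →
    ∃ t : Set Ω, MeasurableSet t ∧ t ⊆ s ∧ 0 < P t ∧ P t < P s

/-- Expected utility. -/
def EUf (P : Measure Ω) (u : ℝ → ℝ) (X : Ω → ℝ) : ℝ := ∫ ω, u (X ω) ∂P

/-- The conjugate `T̃(t) = 1 - T(1-t)` of a probability weighting function. -/
def conjW (T : ℝ → ℝ) : ℝ → ℝ := fun t => 1 - T (1 - t)

/-- Rank-dependent utility `∫₀¹ u(F_X⁻¹(t)) Tc′(t) dt`, where `Tc` is the conjugate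
probability weighting function. -/
def RDUf (P : Measure Ω) (u : ℝ → ℝ) (Tc : ℝ → ℝ) (X : Ω → ℝ) : ℝ :=
  ∫ t in Ioo (0:ℝ) 1, u (quantR P X t) * deriv Tc t

/-- A probability weighting function: maps `[0,1]` to `[0,1]`, twice differentiable,
strictly increasing, `T(0) = 0`, `T(1) = 1`. -/
def IsPWF (T : ℝ → ℝ) : Prop :=
  (∀ t ∈ Icc (0:ℝ) 1, T t ∈ Icc (0:ℝ) 1) ∧ StrictMonoOn T (Icc (0:ℝ) 1) ∧
    (∀ t ∈ Icc (0:ℝ) 1, DifferentiableAt ℝ T t) ∧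
    (∀ t ∈ Icc (0:ℝ) 1, DifferentiableAt ℝ (deriv T) t) ∧ T 0 = 0 ∧ T 1 = 1

/-- A utility function: twice differentiable, strictly concave, strictly increasing. -/
def IsUtility (u : ℝ → ℝ) : Prop :=
  (∀ x, DifferentiableAt ℝ u x) ∧ (∀ x, DifferentiableAt ℝ (deriv u) x) ∧
    StrictConcaveOn ℝ univ u ∧ StrictMono u

/-- `d` is the convex envelope of `g` on `[0,1]`: the greatest convex function
below `g` on `[0,1]`. -/
def IsConvexEnvelope (g d : ℝ → ℝ) : Prop :=
  ConvexOn ℝ (Icc (0:ℝ) 1) d ∧ (∀ t ∈ Icc (0:ℝ) 1, d t ≤ g t) ∧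
    ∀ h : ℝ → ℝ, ConvexOn ℝ (Icc (0:ℝ) 1) h → (∀ t ∈ Icc (0:ℝ) 1, h t ≤ g t) →
      ∀ t ∈ Icc (0:ℝ) 1, h t ≤ d t

/-- Feasible allocations: bounded random variables summing a.s. to the constant `w`. -/
def AllocC (P : Measure Ω) {m : ℕ} (w : ℝ) (X : Fin m → Ω → ℝ) : Prop :=
  (∀ i, IsBddRV (X i)) ∧ ∀ᵐ ω ∂P, (∑ i, X i ω) = w

/-- A quantile function: a nondecreasing left-continuous function on `(0,1)`. -/
def IsQuantFun (f : ℝ → ℝ) : Prop :=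
  MonotoneOn f (Ioo (0:ℝ) 1) ∧ ∀ t ∈ Ioo (0:ℝ) 1, ContinuousWithinAt f (Iic t) t

/-- `I_i := (u_i′)⁻¹`, the inverse marginal utility. -/
def invMarg (u : ℝ → ℝ) : ℝ → ℝ := Function.invFun (deriv u)

end

noncomputable section

open MeasureTheory Set

/-- Feasible allocations among the EU agents: bounded random variables summing a.s. to `Y`. -/
def FeasSum {Ω : Type*} [MeasurableSpace Ω] (P : Measure Ω) {m : ℕ} (Y : Ω → ℝ)
    (X : Fin m → Ω → ℝ) : Prop :=
  (∀ i, IsBddRV (X i)) ∧ ∀ᵐ ω ∂P, (∑ i, X i ω) = Y ω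

open Filter Topology

section

variable {Ω : Type*} [MeasurableSpace Ω] {P : Measure Ω}

theorem IsUtility.differentiable {u : ℝ → ℝ} (hu : IsUtility u) : Differentiable ℝ u := hu.1

theorem IsUtility.continuous {u : ℝ → ℝ} (hu : IsUtility u) : Continuous u :=
  hu.differentiable.continuous

theorem IsUtility.continuous_deriv {u : ℝ → ℝ} (hu : IsUtility u) : Continuous (deriv u) :=
  Differentiable.continuous hu.2.1

theorem IsUtility.le_add_deriv_mul_sub {u : ℝ → ℝ} (hu : IsUtility u) (x y : ℝ) :
    u y ≤ u x + deriv u x * (y - x) := by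
  have hc := hu.2.2.1.concaveOn
  rcases lt_trichotomy x y with h | rfl | h
  · have := hc.slope_le_deriv (mem_univ x) (mem_univ y) h (hu.1 x)
    rw [slope_def_field, div_le_iff₀ (sub_pos.2 h)] at this
    linarith
  · simp
  · have := hc.deriv_le_slope (mem_univ y) (mem_univ x) h (hu.1 x)
    rw [slope_def_field, le_div_iff₀ (sub_pos.2 h)] at this
    linarith

theorem IsUtility.deriv_pos {u : ℝ → ℝ} (hu : IsUtility u) (x : ℝ) : 0 < deriv u x := by
  have h := hu.le_add_deriv_mul_sub x (x + 1)
  have := hu.2.2.2 (lt_add_one x)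
  rw [add_sub_cancel_left, mul_one] at h
  linarith

namespace IsBddRV

variable {X Z : Ω → ℝ}

theorem integrable [IsFiniteMeasure P] (hX : IsBddRV X) : Integrable X P := by
  obtain ⟨C, hC⟩ := hX.2
  exact (integrable_const C).mono' hX.1.aestronglyMeasurable (ae_of_all _ hC)

theorem comp {g : ℝ → ℝ} (hg : Continuous g) (hX : IsBddRV X) : IsBddRV (fun ω => g (X ω)) := by
  obtain ⟨C, hC⟩ := hX.2
  obtain ⟨M, hM⟩ := (isCompact_Icc (a := -C) (b := C)).exists_bound_of_continuousOn hg.continuousOn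
  exact ⟨hg.measurable.comp hX.1, M, fun ω => hM (X ω) (abs_le.1 (hC ω))⟩

theorem add (hX : IsBddRV X) (hZ : IsBddRV Z) : IsBddRV (X + Z) := by
  obtain ⟨C, hC⟩ := hX.2
  obtain ⟨K, hK⟩ := hZ.2
  exact ⟨hX.1.add hZ.1, C + K, fun ω => (abs_add_le _ _).trans (add_le_add (hC ω) (hK ω))⟩

theorem mul (hX : IsBddRV X) (hZ : IsBddRV Z) : IsBddRV (X * Z) := by
  obtain ⟨C, hC⟩ := hX.2
  obtain ⟨K, hK⟩ := hZ.2
  refine ⟨hX.1.mul hZ.1, C * K, fun ω => ?_⟩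
  rw [Pi.mul_apply, abs_mul]
  exact mul_le_mul (hC ω) (hK ω) (abs_nonneg _) ((abs_nonneg _).trans (hC ω))

theorem const_smul (hX : IsBddRV X) (c : ℝ) : IsBddRV (c • X) := by
  obtain ⟨C, hC⟩ := hX.2
  refine ⟨hX.1.const_smul c, |c| * C, fun ω => ?_⟩
  rw [Pi.smul_apply, smul_eq_mul, abs_mul]
  exact mul_le_mul_of_nonneg_left (hC ω) (abs_nonneg c)

theorem neg (hX : IsBddRV X) : IsBddRV (-X) := by
  simpa using hX.const_smul (-1)

theorem sub (hX : IsBddRV X) (hZ : IsBddRV Z) : IsBddRV (X - Z) := by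
  simpa [sub_eq_add_neg] using hX.add hZ.neg

end IsBddRV

theorem HasDerivAt.eventually_nhdsGT_lt {f : ℝ → ℝ} {f' x : ℝ} (hf : HasDerivAt f f' x)
    (hf' : 0 < f') : ∀ᶠ y in 𝓝[>] x, f x < f y := by
  have hslope := (hasDerivAt_iff_tendsto_slope.1 hf).eventually (eventually_gt_nhds hf')
  filter_upwards [nhdsGT_le_nhdsNE x hslope, self_mem_nhdsWithin] with y hy hxy
  exact (slope_pos_iff_of_le (le_of_lt hxy)).1 hy

theorem hasDerivAt_EUf_add_smul [IsFiniteMeasure P] {u : ℝ → ℝ} (hu : Differentiable ℝ u)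
    (hu' : Continuous (deriv u)) {X H : Ω → ℝ} (hX : IsBddRV X) (hH : IsBddRV H) :
    HasDerivAt (fun t : ℝ => EUf P u (X + t • H)) (∫ ω, deriv u (X ω) * H ω ∂P) 0 := by
  obtain ⟨C, hC⟩ := hX.2
  obtain ⟨K, hK⟩ := hH.2
  obtain ⟨M, hM⟩ := (isCompact_Icc (a := -(C + K)) (b := C + K)).exists_bound_of_continuousOn
    hu'.continuousOn
  have hbound : ∀ ω, ∀ t ∈ Metric.ball (0 : ℝ) 1, ‖deriv u (X ω + t * H ω) * H ω‖ ≤ M * K := by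
    intro ω t ht
    have ht1 : |t| ≤ 1 := by simpa using (Metric.mem_ball.1 ht).le
    have hXt : |X ω + t * H ω| ≤ C + K := by
      calc |X ω + t * H ω| ≤ |X ω| + |t| * |H ω| := by
            rw [← abs_mul]; exact abs_add_le _ _
        _ ≤ C + 1 * K := by gcongr; exacts [hC ω, hK ω]
        _ = C + K := by ring
    rw [norm_mul]
    exact mul_le_mul (hM _ (abs_le.1 hXt)) (hK ω) (norm_nonneg _)
      ((norm_nonneg _).trans (hM _ (abs_le.1 hXt)))
  have key := hasDerivAt_integral_of_dominated_loc_of_deriv_le (μ := P) (x₀ := 0)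
    (F := fun t ω => u (X ω + t * H ω)) (F' := fun t ω => deriv u (X ω + t * H ω) * H ω)
    (Metric.ball_mem_nhds 0 one_pos)
    (Eventually.of_forall fun t =>
      (hu.continuous.measurable.comp (hX.1.add (hH.1.const_mul t))).aestronglyMeasurable)
    (by simpa using (hX.comp hu.continuous).integrable)
    (((hu'.measurable.comp (hX.1.add (hH.1.const_mul 0))).mul hH.1).aestronglyMeasurable)
    (ae_of_all _ hbound) (integrable_const _)
    (ae_of_all _ fun ω t _ => by
      simpa [Function.comp_def] using
        (hu _).hasDerivAt.comp t (((hasDerivAt_id t).mul_const (H ω)).const_add (X ω)))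
  simpa [EUf] using key.2

section Transfer

variable {ι M : Type*} [DecidableEq ι] [AddCommGroup M]

def transfer (X : ι → M) (i j : ι) (d : M) : ι → M :=
  Function.update (Function.update X i (X i + d)) j (X j - d)

variable {X : ι → M} {i j k : ι} {d : M}

@[simp]
theorem transfer_apply_left (hij : i ≠ j) : transfer X i j d i = X i + d := by
  simp [transfer, hij]

@[simp]
theorem transfer_apply_right : transfer X i j d j = X j - d := by
  simp [transfer]

theorem transfer_apply_of_ne (hi : k ≠ i) (hj : k ≠ j) : transfer X i j d k = X k := by
  simp [transfer, hi, hj]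

theorem sum_transfer_sub [Fintype ι] {N : Type*} [AddCommGroup N] (w : ι → M → N)
    (hij : i ≠ j) :
    ∑ k, w k (transfer X i j d k) - ∑ k, w k (X k)
      = (w i (X i + d) - w i (X i)) + (w j (X j - d) - w j (X j)) := by
  rw [← Finset.sum_sub_distrib,
    Finset.sum_eq_add_of_mem i j (Finset.mem_univ _) (Finset.mem_univ _) hij]
  · simp [hij]
  · rintro k - ⟨hi, hj⟩
    simp [transfer_apply_of_ne hi hj]

end Transfer

theorem FeasSum.transfer {n : ℕ} {Y : Ω → ℝ} {X : Fin n → Ω → ℝ} (hX : FeasSum P Y X)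
    {i j : Fin n} (hij : i ≠ j) {D : Ω → ℝ} (hD : IsBddRV D) :
    FeasSum P Y (transfer X i j D) := by
  refine ⟨fun k => ?_, ?_⟩
  · rcases eq_or_ne k i with rfl | hi
    · simpa [hij] using (hX.1 k).add hD
    rcases eq_or_ne k j with rfl | hj
    · simpa using (hX.1 k).sub hD
    · simpa [transfer_apply_of_ne hi hj] using hX.1 k
  · filter_upwards [hX.2] with ω hω
    have := sum_transfer_sub (X := X) (d := D) (fun _ Z => Z ω) hij
    simp only [Pi.add_apply, Pi.sub_apply] at this
    linarith

variable {n : ℕ}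

def IsParetoImprovement (P : Measure Ω) (u : Fin n → ℝ → ℝ) (X X' : Fin n → Ω → ℝ) : Prop :=
  (∀ i, EUf P (u i) (X i) ≤ EUf P (u i) (X' i)) ∧ ∃ i, EUf P (u i) (X i) < EUf P (u i) (X' i)

def IsParetoOptimal (P : Measure Ω) (Y : Ω → ℝ) (u : Fin n → ℝ → ℝ) (X : Fin n → Ω → ℝ) :
    Prop :=
  ¬ ∃ X', FeasSum P Y X' ∧ IsParetoImprovement P u X X'

def MaximizesWeightedEU (P : Measure Ω) (Y : Ω → ℝ) (u : Fin n → ℝ → ℝ) (lam : Fin n → ℝ)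
    (X : Fin n → Ω → ℝ) : Prop :=
  ∀ X', FeasSum P Y X' → ∑ i, lam i * EUf P (u i) (X' i) ≤ ∑ i, lam i * EUf P (u i) (X i)

variable {u : Fin n → ℝ → ℝ} {Y : Ω → ℝ} {X : Fin n → Ω → ℝ} {lam : Fin n → ℝ}

theorem MaximizesWeightedEU.isParetoOptimal (hlam : ∀ i, 0 < lam i)
    (h : MaximizesWeightedEU P Y u lam X) : IsParetoOptimal P Y u X := by
  rintro ⟨X', hX', hle, i, hlt⟩
  refine (h X' hX').not_gt (Finset.sum_lt_sum (fun k _ => ?_) ⟨i, Finset.mem_univ i, ?_⟩)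
  · exact mul_le_mul_of_nonneg_left (hle k) (hlam k).le
  · exact mul_lt_mul_of_pos_left hlt (hlam i)

theorem sum_mul_le_of_mul_deriv_eq {ι : Type*} [Fintype ι] {u : ι → ℝ → ℝ}
    (hu : ∀ i, IsUtility (u i)) {lam : ι → ℝ} (hlam : ∀ i, 0 ≤ lam i) {x y : ι → ℝ}
    (hxy : ∑ i, y i = ∑ i, x i) {m : ℝ} (hm : ∀ i, lam i * deriv (u i) (x i) = m) :
    ∑ i, lam i * u i (y i) ≤ ∑ i, lam i * u i (x i) :=
  calc ∑ i, lam i * u i (y i)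
      ≤ ∑ i, lam i * (u i (x i) + deriv (u i) (x i) * (y i - x i)) :=
        Finset.sum_le_sum fun i _ =>
          mul_le_mul_of_nonneg_left ((hu i).le_add_deriv_mul_sub _ _) (hlam i)
    _ = ∑ i, lam i * u i (x i) + m * (∑ i, y i - ∑ i, x i) := by
        rw [mul_sub, Finset.mul_sum, Finset.mul_sum, ← Finset.sum_sub_distrib,
          ← Finset.sum_add_distrib]
        exact Finset.sum_congr rfl fun i _ => by rw [← hm i]; ring
    _ = ∑ i, lam i * u i (x i) := by rw [hxy, sub_self, mul_zero, add_zero]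

theorem maximizesWeightedEU_of_ae_mul_deriv_eq [IsFiniteMeasure P] (hn : 1 ≤ n)
    (hu : ∀ i, IsUtility (u i)) (hX : FeasSum P Y X) (hlam : ∀ i, 0 ≤ lam i)
    (hfoc : ∀ i j, ∀ᵐ ω ∂P, lam i * deriv (u i) (X i ω) = lam j * deriv (u j) (X j ω)) :
    MaximizesWeightedEU P Y u lam X := by
  have hint (Z : Fin n → Ω → ℝ) (hZ : ∀ i, IsBddRV (Z i)) :
      Integrable (fun ω => ∑ i, lam i * u i (Z i ω)) P :=
    integrable_finsetSum _ fun i _ =>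
      (((hZ i).comp (hu i).continuous).integrable).const_mul (lam i)
  have hsum (Z : Fin n → Ω → ℝ) (hZ : ∀ i, IsBddRV (Z i)) :
      ∑ i, lam i * EUf P (u i) (Z i) = ∫ ω, ∑ i, lam i * u i (Z i ω) ∂P := by
    rw [integral_finsetSum _ fun i _ =>
      (((hZ i).comp (hu i).continuous).integrable).const_mul (lam i)]
    simp only [EUf, integral_const_mul]
  intro X' hX'
  rw [hsum X' hX'.1, hsum X hX.1]
  refine integral_mono_ae (hint X' hX'.1) (hint X hX.1) ?_
  filter_upwards [hX.2, hX'.2, ae_all_iff.2 fun i => hfoc i ⟨0, hn⟩] with ω hXω hX'ω hfocω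
  exact sum_mul_le_of_mul_deriv_eq hu hlam (hX'ω.trans hXω.symm) hfocω

theorem MaximizesWeightedEU.ae_mul_deriv_eq [IsFiniteMeasure P] (hu : ∀ i, IsUtility (u i))
    (hX : FeasSum P Y X) (h : MaximizesWeightedEU P Y u lam X) (i j : Fin n) :
    ∀ᵐ ω ∂P, lam i * deriv (u i) (X i ω) = lam j * deriv (u j) (X j ω) := by
  rcases eq_or_ne i j with rfl | hij
  · exact ae_of_all _ fun _ => rfl
  have hg (k : Fin n) : IsBddRV fun ω => deriv (u k) (X k ω) :=
    (hX.1 k).comp (hu k).continuous_deriv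
  set D : Ω → ℝ := fun ω => lam i * deriv (u i) (X i ω) - lam j * deriv (u j) (X j ω)
  have hD : IsBddRV D := ((hg i).const_smul (lam i)).sub ((hg j).const_smul (lam j))
  set φ : ℝ → ℝ := fun t => lam i * EUf P (u i) (X i + t • D) + lam j * EUf P (u j) (X j + t • -D)
  have hφ : HasDerivAt φ (lam i * ∫ ω, deriv (u i) (X i ω) * D ω ∂P
      + lam j * ∫ ω, deriv (u j) (X j ω) * (-D) ω ∂P) 0 :=
    ((hasDerivAt_EUf_add_smul (hu i).differentiable (hu i).continuous_deriv (hX.1 i) hD).const_mul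
      _).add ((hasDerivAt_EUf_add_smul (hu j).differentiable (hu j).continuous_deriv (hX.1 j)
        hD.neg).const_mul _)
  have hmax : IsLocalMax φ 0 := by
    refine IsMaxOn.isLocalMax (fun t _ => ?_) univ_mem
    have := sum_transfer_sub (X := X) (d := t • D) (fun k Z => lam k * EUf P (u k) Z) hij
    have := h _ (hX.transfer hij (hD.const_smul t))
    show φ t ≤ φ 0
    simp only [φ, zero_smul, add_zero, smul_neg, ← sub_eq_add_neg, sub_zero]
    linarith
  have hDD : ∫ ω, D ω * D ω ∂P = 0 := by
    rw [← hmax.hasDerivAt_eq_zero hφ, ← integral_const_mul, ← integral_const_mul,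
      ← integral_add]
    · exact integral_congr_ae (ae_of_all _ fun ω => by simp only [D, Pi.neg_apply]; ring)
    · exact ((hg i).mul hD).integrable.const_mul _
    · exact ((hg j).mul hD.neg).integrable.const_mul _
  filter_upwards [(integral_eq_zero_iff_of_nonneg (fun ω => mul_self_nonneg (D ω))
    (hD.mul hD).integrable).1 hDD] with ω hω
  exact sub_eq_zero.1 (mul_self_eq_zero.1 hω)

theorem IsParetoOptimal.integral_deriv_mul_nonneg [IsFiniteMeasure P]
    (hu : ∀ i, IsUtility (u i)) (hX : FeasSum P Y X) (h : IsParetoOptimal P Y u X)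
    {i j : Fin n} (hij : i ≠ j) {D : Ω → ℝ} (hD : IsBddRV D)
    (hi : 0 < ∫ ω, deriv (u i) (X i ω) * D ω ∂P) :
    0 ≤ ∫ ω, deriv (u j) (X j ω) * D ω ∂P := by
  by_contra! hj
  have hgain_i := (hasDerivAt_EUf_add_smul (hu i).differentiable (hu i).continuous_deriv
    (hX.1 i) hD).eventually_nhdsGT_lt hi
  have hgain_j := (hasDerivAt_EUf_add_smul (hu j).differentiable (hu j).continuous_deriv
    (hX.1 j) hD.neg).eventually_nhdsGT_lt (by simpa [integral_neg] using hj)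
  obtain ⟨t, hti, htj⟩ := (hgain_i.and hgain_j).exists
  simp only [zero_smul, add_zero, smul_neg, ← sub_eq_add_neg] at hti htj
  refine h ⟨transfer X i j (t • D), hX.transfer hij (hD.const_smul t), fun k => ?_,
    i, by simpa [hij] using hti⟩
  rcases eq_or_ne k i with rfl | hki
  · simpa [hij] using hti.le
  rcases eq_or_ne k j with rfl | hkj
  · simpa using htj.le
  · rw [transfer_apply_of_ne hki hkj]

theorem ae_eq_mul_of_integral_mul_pos_imp [IsFiniteMeasure P] {f g : Ω → ℝ} (hf : IsBddRV f)
    (hg : IsBddRV g) (hff : 0 < ∫ ω, f ω * f ω ∂P)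
    (h : ∀ D : Ω → ℝ, IsBddRV D → 0 < ∫ ω, f ω * D ω ∂P → 0 ≤ ∫ ω, g ω * D ω ∂P) :
    g =ᵐ[P] fun ω => (∫ ω, f ω * g ω ∂P) / (∫ ω, f ω * f ω ∂P) * f ω := by
  set c := (∫ ω, f ω * g ω ∂P) / (∫ ω, f ω * f ω ∂P) with hc
  set K : Ω → ℝ := fun ω => g ω - c * f ω
  have hK : IsBddRV K := hg.sub (hf.const_smul c)
  have hint {a b : Ω → ℝ} (ha : IsBddRV a) (hb : IsBddRV b) :
      Integrable (fun ω => a ω * b ω) P := (ha.mul hb).integrable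
  have hfK : ∫ ω, f ω * K ω ∂P = 0 := by
    simp only [K, mul_sub, mul_left_comm (f _) c]
    rw [integral_sub (hint hf hg) ((hint hf hf).const_mul c), integral_const_mul, hc,
      div_mul_cancel₀ _ hff.ne', sub_self]
  have hKK : ∫ ω, K ω * K ω ∂P = ∫ ω, g ω * K ω ∂P := by
    simp only [K, sub_mul (g _), mul_assoc c]
    rw [integral_sub (hint hg hK) ((hint hf hK).const_mul c), integral_const_mul, hfK,
      mul_zero, sub_zero]
  have hgK (t : ℝ) (ht : 0 < t) : ∫ ω, g ω * K ω ∂P ≤ t * ∫ ω, g ω * f ω ∂P := by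
    have hD : IsBddRV (t • f - K) := (hf.const_smul t).sub hK
    have hlin {a : Ω → ℝ} (ha : IsBddRV a) :
        ∫ ω, a ω * (t • f - K) ω ∂P = t * ∫ ω, a ω * f ω ∂P - ∫ ω, a ω * K ω ∂P := by
      simp only [Pi.sub_apply, Pi.smul_apply, smul_eq_mul, mul_sub, mul_left_comm (a _) t]
      rw [integral_sub ((hint ha hf).const_mul t) (hint ha hK), integral_const_mul]
    have := h _ hD (by rw [hlin hf, hfK, sub_zero]; positivity)
    rw [hlin hg] at this
    linarith
  have hKK0 : ∫ ω, K ω * K ω ∂P = 0 := by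
    refine le_antisymm ?_ (integral_nonneg fun ω => mul_self_nonneg (K ω))
    rw [hKK]
    have hlim : Tendsto (fun t => t * ∫ ω, g ω * f ω ∂P) (𝓝[>] 0) (𝓝 0) :=
      ((continuous_mul_const _).tendsto' 0 0 (zero_mul _)).mono_left nhdsWithin_le_nhds
    exact ge_of_tendsto hlim (eventually_nhdsWithin_of_forall hgK)
  filter_upwards [(integral_eq_zero_iff_of_nonneg (fun ω => mul_self_nonneg (K ω))
    (hint hK hK)).1 hKK0] with ω hω
  exact sub_eq_zero.1 (mul_self_eq_zero.1 hω)

theorem IsParetoOptimal.exists_ae_mul_deriv_eq [IsProbabilityMeasure P] (hn : 1 ≤ n)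
    (hu : ∀ i, IsUtility (u i)) (hX : FeasSum P Y X) (h : IsParetoOptimal P Y u X) :
    ∃ lam : Fin n → ℝ, (∀ i, 0 < lam i) ∧
      ∀ i j, ∀ᵐ ω ∂P, lam i * deriv (u i) (X i ω) = lam j * deriv (u j) (X j ω) := by
  set i₀ : Fin n := ⟨0, hn⟩
  set g : Fin n → Ω → ℝ := fun i ω => deriv (u i) (X i ω)
  have hg (i : Fin n) : IsBddRV (g i) := (hX.1 i).comp (hu i).continuous_deriv
  have hpos (i : Fin n) : 0 < ∫ ω, g i₀ ω * g i ω ∂P := by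
    refine (integral_pos_iff_support_of_nonneg
      (fun ω => (mul_pos ((hu i₀).deriv_pos _) ((hu i).deriv_pos _)).le)
      ((hg i₀).mul (hg i)).integrable).2 ?_
    simp [Function.support, ((hu i₀).deriv_pos _).ne', ((hu i).deriv_pos _).ne']
  have hprop (i : Fin n) :
      g i =ᵐ[P] fun ω => (∫ ω, g i₀ ω * g i ω ∂P) / (∫ ω, g i₀ ω * g i₀ ω ∂P) * g i₀ ω := by
    refine ae_eq_mul_of_integral_mul_pos_imp (hg i₀) (hg i) (hpos i₀) fun D hD hD0 => ?_
    rcases eq_or_ne i₀ i with rfl | hi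
    · exact hD0.le
    · exact h.integral_deriv_mul_nonneg hu hX hi hD hD0
  refine ⟨fun i => (∫ ω, g i₀ ω * g i₀ ω ∂P) / (∫ ω, g i₀ ω * g i ω ∂P),
    fun i => div_pos (hpos i₀) (hpos i), fun i j => ?_⟩
  filter_upwards [hprop i, hprop j] with ω hi hj
  change _ * g i ω = _ * g j ω
  rw [hi, hj]
  field_simp [(hpos i).ne', (hpos j).ne', (hpos i₀).ne']

end

theorem statement1_general
    {Ω : Type*} [MeasurableSpace Ω] (P : Measure Ω) [IsProbabilityMeasure P]
    (n : ℕ) (hn : 1 ≤ n)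
    (u : Fin n → ℝ → ℝ) (hu : ∀ i, IsUtility (u i))
    (Y : Ω → ℝ)
    (X : Fin n → Ω → ℝ) (hX : FeasSum P Y X) :
    ((¬ ∃ X' : Fin n → Ω → ℝ, FeasSum P Y X' ∧
        (∀ i, EUf P (u i) (X i) ≤ EUf P (u i) (X' i)) ∧
        ∃ i, EUf P (u i) (X i) < EUf P (u i) (X' i))
      ↔ ∃ lam : Fin n → ℝ, (∀ i, 0 < lam i) ∧
          ∀ X' : Fin n → Ω → ℝ, FeasSum P Y X' →
            (∑ i, lam i * EUf P (u i) (X' i)) ≤ ∑ i, lam i * EUf P (u i) (X i))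
    ∧
    (∀ lam : Fin n → ℝ, (∀ i, 0 < lam i) →
      ((∀ X' : Fin n → Ω → ℝ, FeasSum P Y X' →
          (∑ i, lam i * EUf P (u i) (X' i)) ≤ ∑ i, lam i * EUf P (u i) (X i))
        ↔ ∀ i j : Fin n, ∀ᵐ ω ∂P,
            lam i * deriv (u i) (X i ω) = lam j * deriv (u j) (X j ω))) := by
  have weighted_iff (lam : Fin n → ℝ) (hlam : ∀ i, 0 < lam i) :
      MaximizesWeightedEU P Y u lam X ↔
        ∀ i j, ∀ᵐ ω ∂P, lam i * deriv (u i) (X i ω) = lam j * deriv (u j) (X j ω) :=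
    ⟨fun hmax => hmax.ae_mul_deriv_eq hu hX,
      maximizesWeightedEU_of_ae_mul_deriv_eq hn hu hX fun i => (hlam i).le⟩
  refine ⟨⟨fun hpar => ?_, fun ⟨lam, hlam, hmax⟩ =>
    MaximizesWeightedEU.isParetoOptimal hlam hmax⟩, weighted_iff⟩
  obtain ⟨lam, hlam, hfoc⟩ := IsParetoOptimal.exists_ae_mul_deriv_eq hn hu hX hpar
  exact ⟨lam, hlam, (weighted_iff lam hlam).2 hfoc⟩

/-- For EU agents `i = 2,…,n` (here indexed by `Fin n`, `n ≥ 1`) and a bounded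
random variable `Y`:
(1) a feasible vector is `Y`-Pareto optimal iff it maximizes a strictly positively weighted
sum of expected utilities among feasible vectors;
(2) for a given strictly positive weight vector, it maximizes the weighted sum iff
`λ_i u_i′(X_i) = λ_j u_j′(X_j)` a.s. for all `i, j`. -/
theorem statement1
    {Ω : Type*} [MeasurableSpace Ω] (P : Measure Ω) [IsProbabilityMeasure P]
    (hP : NonatomicM P)
    (n : ℕ) (hn : 1 ≤ n)
    (u : Fin n → ℝ → ℝ) (hu : ∀ i, IsUtility (u i))
    (Y : Ω → ℝ) (hY : IsBddRV Y)
    (X : Fin n → Ω → ℝ) (hX : FeasSum P Y X) :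
    ((¬ ∃ X' : Fin n → Ω → ℝ, FeasSum P Y X' ∧
        (∀ i, EUf P (u i) (X i) ≤ EUf P (u i) (X' i)) ∧
        ∃ i, EUf P (u i) (X i) < EUf P (u i) (X' i))
      ↔ ∃ lam : Fin n → ℝ, (∀ i, 0 < lam i) ∧
          ∀ X' : Fin n → Ω → ℝ, FeasSum P Y X' →
            (∑ i, lam i * EUf P (u i) (X' i)) ≤ ∑ i, lam i * EUf P (u i) (X i))
    ∧
    (∀ lam : Fin n → ℝ, (∀ i, 0 < lam i) →
      ((∀ X' : Fin n → Ω → ℝ, FeasSum P Y X' →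
          (∑ i, lam i * EUf P (u i) (X' i)) ≤ ∑ i, lam i * EUf P (u i) (X i))
        ↔ ∀ i j : Fin n, ∀ᵐ ω ∂P,
            lam i * deriv (u i) (X i ω) = lam j * deriv (u j) (X j ω))) :=
  statement1_general P n hn u hu Y X hX

end
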